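/- Let α ∈ (0,1], let μ be a probability distribution on the k-element subsets of [n] with single-element marginals p_i = (1/k)·∑_{S ∋ i} μ(S). Suppose μ is (1/α)-entropically independent, i.e., for every probability distribution ν on the k-element subsets of [n] with supp(ν) ⊆ supp(μ), D(ν D_{k→1} ‖ μ D_{k→1}) ≤ (1/(αk))·D(ν ‖ μ). Then for all (z₁,…,zₙ) ∈ ℝ^n_{≥0}, g_μ(z₁,…,zₙ) ≤ (∑_{i=1}^n p_i z_i^{1/α})^{αk}. -/

import Mathlib

/-!
Tilt `μ` by the external field `z`: `ν(S) ∝ μ(S) ∏_{i∈S} z_i`. Then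
`D(ν ‖ μ) = k ∑ q_i log z_i - log g_μ(z)` with `q = ν D_{k→1}`, so entropic independence gives
`log g_μ(z) ≤ k ∑ q_i log z_i - αk D(q ‖ p) = αk ∑ q_i log (p_i z_i^{1/α} / q_i)`,
and Jensen's inequality for `log` bounds the right-hand side by `αk log ∑ p_i z_i^{1/α}`.
-/

open Finset

/-- The generating polynomial `g_μ(z) = ∑_S μ(S) ∏_{i∈S} z_i`. -/
noncomputable def genPoly {n : ℕ} (μ : Finset (Fin n) → ℝ) (z : Fin n → ℝ) : ℝ :=
  ∑ S : Finset (Fin n), μ S * ∏ i ∈ S, z i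

/-- The `k → 1` down operator: `(ν D_{k→1})(i) = (1/k) ∑_{S ∋ i} ν(S)`. -/
noncomputable def down1 {n : ℕ} (k : ℕ) (ν : Finset (Fin n) → ℝ) (i : Fin n) : ℝ :=
  (1 / (k : ℝ)) * ∑ S ∈ Finset.univ.filter (fun S => i ∈ S), ν S

/-- KL divergence `D(ν ‖ μ) = ∑_x ν(x) log (ν(x)/μ(x))` on a finite type. -/
noncomputable def KLdiv {X : Type*} [Fintype X] (ν μ : X → ℝ) : ℝ :=
  ∑ x : X, ν x * Real.log (ν x / μ x)

open Real

theorem sum_mul_log_div_le_log_sum {ι : Type*} [Fintype ι] {q a : ι → ℝ}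
    (hq0 : ∀ i, 0 ≤ q i) (hq1 : ∑ i, q i = 1) (ha0 : ∀ i, 0 ≤ a i)
    (ha : ∀ i, q i ≠ 0 → 0 < a i) :
    ∑ i, q i * log (a i / q i) ≤ log (∑ i, a i) := by
  classical
  set s := univ.filter (q · ≠ 0)
  have hs : ∑ i ∈ s, q i = 1 := by rw [sum_filter_ne_zero, hq1]
  have has : 0 < ∑ i ∈ s, a i := by
    obtain ⟨i, hi, -⟩ := exists_ne_zero_of_sum_ne_zero (hs ▸ one_ne_zero)
    exact sum_pos' (fun j _ => ha0 j) ⟨i, hi, ha i (mem_filter.1 hi).2⟩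
  calc ∑ i, q i * log (a i / q i) = ∑ i ∈ s, q i * log (a i / q i) := by
        rw [sum_filter_of_ne fun i _ h => left_ne_zero_of_mul h]
    _ ≤ log (∑ i ∈ s, q i * (a i / q i)) :=
        strictConcaveOn_log_Ioi.concaveOn.le_map_sum (fun i _ => hq0 i) hs
          fun i hi => div_pos (ha i (mem_filter.1 hi).2)
            ((hq0 i).lt_of_ne' (mem_filter.1 hi).2)
    _ = log (∑ i ∈ s, a i) := by
        congr 1
        exact sum_congr rfl fun i hi => mul_div_cancel₀ _ (mem_filter.1 hi).2
    _ ≤ log (∑ i, a i) :=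
        log_le_log has (sum_le_sum_of_subset_of_nonneg (subset_univ s) fun i _ _ => ha0 i)

theorem mul_log_mul_rpow_div {α p q x : ℝ} (hα : α ≠ 0) (hpx : q ≠ 0 → 0 < p ∧ 0 < x) :
    α * (q * log (p * x ^ (1 / α) / q)) = q * log x - α * (q * log (q / p)) := by
  rcases eq_or_ne q 0 with rfl | hq
  · simp
  obtain ⟨hp, hx⟩ := hpx hq
  rw [log_div (by positivity) hq, log_mul hp.ne' (by positivity), log_rpow hx,
    log_div hq hp.ne']
  field_simp
  ring

section Marginals

variable {n k : ℕ}

theorem down1_nonneg {ν : Finset (Fin n) → ℝ} (hν0 : ∀ S, 0 ≤ ν S) (i : Fin n) :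
    0 ≤ down1 k ν i :=
  mul_nonneg (by positivity) (sum_nonneg fun S _ => hν0 S)

theorem down1_pos {ν : Finset (Fin n) → ℝ} (hν0 : ∀ S, 0 ≤ ν S) (hk : k ≠ 0)
    {S : Finset (Fin n)} {i : Fin n} (hi : i ∈ S) (hS : ν S ≠ 0) :
    0 < down1 k ν i :=
  mul_pos (by positivity)
    (sum_pos' (fun T _ => hν0 T) ⟨S, mem_filter.2 ⟨mem_univ S, hi⟩, (hν0 S).lt_of_ne' hS⟩)

theorem exists_mem_ne_zero_of_down1_ne_zero {ν : Finset (Fin n) → ℝ} {i : Fin n}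
    (h : down1 k ν i ≠ 0) : ∃ S, i ∈ S ∧ ν S ≠ 0 := by
  obtain ⟨S, hS, hνS⟩ := exists_ne_zero_of_sum_ne_zero (right_ne_zero_of_mul h)
  exact ⟨S, (mem_filter.1 hS).2, hνS⟩

/-- Double counting of the pairs `i ∈ S`. -/
theorem sum_mul_sum_eq_mul_sum_down1 (hk : k ≠ 0) (ν : Finset (Fin n) → ℝ) (w : Fin n → ℝ) :
    ∑ S, ν S * ∑ i ∈ S, w i = k * ∑ i, w i * down1 k ν i := by
  have hk' : (k : ℝ) ≠ 0 := Nat.cast_ne_zero.2 hk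
  simp_rw [mul_sum, down1]
  rw [sum_comm' (t' := univ) (s' := fun i => univ.filter (i ∈ ·)) (by simp)]
  refine sum_congr rfl fun i _ => ?_
  rw [mul_sum, mul_sum, mul_sum]
  refine sum_congr rfl fun S _ => ?_
  field_simp

theorem sum_down1_eq_one (hk : k ≠ 0) {ν : Finset (Fin n) → ℝ}
    (hνk : ∀ S, ν S ≠ 0 → S.card = k) (hν1 : ∑ S, ν S = 1) :
    ∑ i, down1 k ν i = 1 := by
  have hcount := sum_mul_sum_eq_mul_sum_down1 hk ν fun _ => 1
  have hcard : ∀ S, ν S * ∑ _i ∈ S, (1 : ℝ) = k * ν S := fun S => by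
    rcases eq_or_ne (ν S) 0 with h | h
    · simp [h]
    · simp [hνk S h, mul_comm]
  simp_rw [hcard, ← mul_sum, hν1, one_mul] at hcount
  exact mul_left_cancel₀ (Nat.cast_ne_zero.2 hk) hcount.symm

end Marginals

section Tilt

variable {n : ℕ} {μ : Finset (Fin n) → ℝ} {z : Fin n → ℝ}

theorem genPoly_nonneg (hμ0 : ∀ S, 0 ≤ μ S) (hz : ∀ i, 0 ≤ z i) : 0 ≤ genPoly μ z :=
  sum_nonneg fun S _ => mul_nonneg (hμ0 S) (prod_nonneg fun i _ => hz i)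

theorem genPoly_eq_sum_of_card_eq_zero (hμk : ∀ S, μ S ≠ 0 → S.card = 0) (z : Fin n → ℝ) :
    genPoly μ z = ∑ S, μ S := by
  refine sum_congr rfl fun S _ => ?_
  rcases eq_or_ne (μ S) 0 with h | h
  · simp [h]
  · simp [card_eq_zero.1 (hμk S h)]

noncomputable def tilt (μ : Finset (Fin n) → ℝ) (z : Fin n → ℝ) (S : Finset (Fin n)) : ℝ :=
  μ S * (∏ i ∈ S, z i) / genPoly μ z

theorem tilt_nonneg (hμ0 : ∀ S, 0 ≤ μ S) (hz : ∀ i, 0 ≤ z i) (S : Finset (Fin n)) :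
    0 ≤ tilt μ z S :=
  div_nonneg (mul_nonneg (hμ0 S) (prod_nonneg fun i _ => hz i)) (genPoly_nonneg hμ0 hz)

theorem tilt_eq_zero_of_eq_zero {S : Finset (Fin n)} (h : μ S = 0) : tilt μ z S = 0 := by
  simp [tilt, h]

theorem ne_zero_of_tilt_ne_zero {S : Finset (Fin n)} (h : tilt μ z S ≠ 0) :
    μ S ≠ 0 ∧ ∀ i ∈ S, z i ≠ 0 := by
  have h' := (div_ne_zero_iff.1 h).1
  exact ⟨left_ne_zero_of_mul h', prod_ne_zero_iff.1 (right_ne_zero_of_mul h')⟩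

theorem sum_tilt (hg : genPoly μ z ≠ 0) : ∑ S, tilt μ z S = 1 := by
  rw [← div_self hg, genPoly, sum_div]
  rfl

theorem KLdiv_tilt {k : ℕ} (hk : k ≠ 0) (hg : genPoly μ z ≠ 0) :
    KLdiv (tilt μ z) μ = k * ∑ i, log (z i) * down1 k (tilt μ z) i - log (genPoly μ z) := by
  have hterm : ∀ S, tilt μ z S * log (tilt μ z S / μ S)
      = tilt μ z S * ∑ i ∈ S, log (z i) - tilt μ z S * log (genPoly μ z) := fun S => by
    rcases eq_or_ne (tilt μ z S) 0 with h | h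
    · simp [h]
    obtain ⟨hμS, hzS⟩ := ne_zero_of_tilt_ne_zero h
    have hratio : tilt μ z S / μ S = (∏ i ∈ S, z i) / genPoly μ z := by
      rw [tilt]; field_simp
    rw [hratio, log_div (prod_ne_zero_iff.2 hzS) hg, log_prod hzS, mul_sub]
  rw [KLdiv, sum_congr rfl fun S _ => hterm S, sum_sub_distrib, ← sum_mul, sum_tilt hg,
    one_mul, sum_mul_sum_eq_mul_sum_down1 hk]

theorem pos_of_down1_tilt_ne_zero {k : ℕ} (hk : k ≠ 0) (hμ0 : ∀ S, 0 ≤ μ S)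
    (hz : ∀ i, 0 ≤ z i) {i : Fin n} (h : down1 k (tilt μ z) i ≠ 0) :
    0 < down1 k μ i ∧ 0 < z i := by
  obtain ⟨S, hi, hS⟩ := exists_mem_ne_zero_of_down1_ne_zero h
  obtain ⟨hμS, hzS⟩ := ne_zero_of_tilt_ne_zero hS
  exact ⟨down1_pos hμ0 hk hi hμS, (hz i).lt_of_ne' (hzS i hi)⟩

theorem sum_down1_mul_rpow_pos {k : ℕ} (hk : k ≠ 0) (hμ0 : ∀ S, 0 ≤ μ S)
    (hz : ∀ i, 0 ≤ z i) (hq1 : ∑ i, down1 k (tilt μ z) i = 1) (β : ℝ) :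
    0 < ∑ i, down1 k μ i * z i ^ β := by
  obtain ⟨i, -, hi⟩ := exists_ne_zero_of_sum_ne_zero (hq1 ▸ one_ne_zero)
  obtain ⟨hpi, hzi⟩ := pos_of_down1_tilt_ne_zero hk hμ0 hz hi
  exact sum_pos' (fun j _ => mul_nonneg (down1_nonneg hμ0 j) (rpow_nonneg (hz j) _))
    ⟨i, mem_univ i, mul_pos hpi (rpow_pos_of_pos hzi _)⟩

theorem log_genPoly_le {k : ℕ} {α : ℝ} (hk : k ≠ 0) (hα : 0 < α) (hμ0 : ∀ S, 0 ≤ μ S)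
    (hz : ∀ i, 0 ≤ z i) (hg : genPoly μ z ≠ 0) (hq1 : ∑ i, down1 k (tilt μ z) i = 1)
    (hEI : α * k * KLdiv (down1 k (tilt μ z)) (down1 k μ) ≤ KLdiv (tilt μ z) μ) :
    log (genPoly μ z) ≤ α * k * log (∑ i, down1 k μ i * z i ^ (1 / α)) := by
  set p := down1 k μ
  set q := down1 k (tilt μ z)
  have hsupp : ∀ i, q i ≠ 0 → 0 < p i ∧ 0 < z i := fun i =>
    pos_of_down1_tilt_ne_zero hk hμ0 hz
  calc log (genPoly μ z) = k * ∑ i, log (z i) * q i - KLdiv (tilt μ z) μ := by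
        rw [KLdiv_tilt hk hg]; ring
    _ ≤ k * ∑ i, log (z i) * q i - α * k * KLdiv q p := by linarith
    _ = α * k * ∑ i, q i * log (p i * z i ^ (1 / α) / q i) := by
        simp_rw [KLdiv, mul_sum, ← sum_sub_distrib]
        refine sum_congr rfl fun i _ => ?_
        rw [mul_comm α, mul_assoc, mul_assoc, mul_log_mul_rpow_div hα.ne' (hsupp i)]
        ring
    _ ≤ α * k * log (∑ i, p i * z i ^ (1 / α)) := by
        gcongr
        exact sum_mul_log_div_le_log_sum (down1_nonneg (tilt_nonneg hμ0 hz)) hq1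
          (fun i => mul_nonneg (down1_nonneg hμ0 i) (rpow_nonneg (hz i) _))
          fun i hi => mul_pos (hsupp i hi).1 (rpow_pos_of_pos (hsupp i hi).2 _)

end Tilt

theorem stmt_2_general (n k : ℕ) (α : ℝ) (hα0 : 0 < α)
    (μ : Finset (Fin n) → ℝ)
    (hμ0 : ∀ S, 0 ≤ μ S)
    (hμk : ∀ S, μ S ≠ 0 → S.card = k)
    (hμ1 : ∑ S : Finset (Fin n), μ S = 1)
    (hEI : ∀ ν : Finset (Fin n) → ℝ,
      (∀ S, 0 ≤ ν S) → (∀ S, ν S ≠ 0 → S.card = k) →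
      (∑ S : Finset (Fin n), ν S = 1) → (∀ S, μ S = 0 → ν S = 0) →
      KLdiv (down1 k ν) (down1 k μ) ≤ (1 / (α * (k : ℝ))) * KLdiv ν μ) :
    ∀ z : Fin n → ℝ, (∀ i, 0 ≤ z i) →
      genPoly μ z ≤ (∑ i : Fin n, down1 k μ i * z i ^ (1 / α)) ^ (α * (k : ℝ)) := by
  intro z hz
  rcases Nat.eq_zero_or_pos k with rfl | hk
  · simp [genPoly_eq_sum_of_card_eq_zero hμk, hμ1, down1]
  rcases (genPoly_nonneg hμ0 hz).eq_or_lt with hg | hg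
  · rw [← hg]
    exact rpow_nonneg (sum_nonneg fun i _ =>
      mul_nonneg (down1_nonneg hμ0 i) (rpow_nonneg (hz i) _)) _
  have hνk : ∀ S, tilt μ z S ≠ 0 → S.card = k := fun S h =>
    hμk S (ne_zero_of_tilt_ne_zero h).1
  have hq1 := sum_down1_eq_one hk.ne' hνk (sum_tilt hg.ne')
  have hT := sum_down1_mul_rpow_pos hk.ne' hμ0 hz hq1 (1 / α)
  rw [← log_le_log_iff hg (rpow_pos_of_pos hT _), log_rpow hT]
  refine log_genPoly_le hk.ne' hα0 hμ0 hz hg.ne' hq1 ?_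
  have hEIν := hEI _ (tilt_nonneg hμ0 hz) hνk (sum_tilt hg.ne') fun S => tilt_eq_zero_of_eq_zero
  rwa [one_div, ← div_eq_inv_mul, le_div_iff₀' (by positivity)] at hEIν

theorem stmt_2 (n k : ℕ) (α : ℝ) (hα0 : 0 < α) (hα1 : α ≤ 1)
    (μ : Finset (Fin n) → ℝ)
    (hμ0 : ∀ S, 0 ≤ μ S)
    (hμk : ∀ S, μ S ≠ 0 → S.card = k)
    (hμ1 : ∑ S : Finset (Fin n), μ S = 1)
    (hEI : ∀ ν : Finset (Fin n) → ℝ,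
      (∀ S, 0 ≤ ν S) → (∀ S, ν S ≠ 0 → S.card = k) →
      (∑ S : Finset (Fin n), ν S = 1) → (∀ S, μ S = 0 → ν S = 0) →
      KLdiv (down1 k ν) (down1 k μ) ≤ (1 / (α * (k : ℝ))) * KLdiv ν μ) :
    ∀ z : Fin n → ℝ, (∀ i, 0 ≤ z i) →
      genPoly μ z ≤ (∑ i : Fin n, down1 k μ i * z i ^ (1 / α)) ^ (α * (k : ℝ)) :=
  stmt_2_general n k α hα0 μ hμ0 hμk hμ1 hEI
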